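/- arXiv:2211.07196 — 2 statements merged into one kernel-verified Lean document; each statement's English description precedes it below -/
import Mathlib

section
/- Let n ≥ 1 be an integer, let a < b be real numbers, and let f ∈ 𝒟ⁿ([a,b]) satisfy f^{(n)}(t) ≥ n! for every t ∈ (a,b). Then there exists a monic real polynomial P of degree n, all of whose roots are real and lie in [a,b], such that |f(x)| ≥ |P(x)| for every x ∈ [a,b]. -/
/-!
Induction on `n`. Let `z` minimise `|f|` on `[a,b]`; by the intermediate value theorem `f` does
not change sign, so `|f x - f z| ≤ |f x|`. Write `f x - f z = (x - z) g x` with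
`g x = ∫₀¹ f'(z + t (x - z)) dt`. Differentiating under the integral, `g` is again `n - 1` times
differentiable, and the lower bound on `f⁽ⁿ⁾`, used in the form "`f⁽ⁿ⁻¹⁾ - n! x` is monotone",
becomes "`g⁽ⁿ⁻²⁾ - (n-1)! x` is monotone" because `∫₀¹ tⁿ⁻¹ · t dt = 1/n`. Induction gives a
monic `Q` of degree `n - 1` with roots in `[a,b]` and `|Q| ≤ |g|`, and `P = (X - z) Q` works.
-/

open Set Polynomial Nat MeasureTheory ENNReal

/-- `fd 0` belongs to `𝒟ⁿ([a,b])`, with `fd k` its `k`-th derivative: `fd k` exists and is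
continuous on `[a,b]` for `0 ≤ k ≤ n-1`, and `fd n` is the derivative of `fd (n-1)` on `(a,b)`. -/
def IsDn (n : ℕ) (a b : ℝ) (fd : ℕ → ℝ → ℝ) : Prop :=
  (∀ k, k + 1 < n → ∀ x ∈ Set.Icc a b, HasDerivWithinAt (fd k) (fd (k + 1) x) (Set.Icc a b) x) ∧
  ContinuousOn (fd (n - 1)) (Set.Icc a b) ∧
  (∀ x ∈ Set.Ioo a b, HasDerivAt (fd (n - 1)) (fd n x) x)

/-- `m_n(f) = inf_{a<t<b} |f^{(n)}(t)|`. -/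
noncomputable def mIoo (n : ℕ) (a b : ℝ) (fd : ℕ → ℝ → ℝ) : ℝ :=
  sInf ((fun t => |fd n t|) '' Set.Ioo a b)

/-- `‖f‖_{p,[a,b]}` for `0 < p < ∞`. -/
noncomputable def Lp (p a b : ℝ) (f : ℝ → ℝ) : ℝ :=
  (∫ t in a..b, |f t| ^ p) ^ (1 / p)

/-- `‖f‖_{∞,[a,b]}`. -/
noncomputable def Lsup (a b : ℝ) (f : ℝ → ℝ) : ℝ :=
  sSup ((fun t => |f t|) '' Set.Icc a b)

/-- `‖f‖_{p,[a,b]}` for `0 < p ≤ ∞`. -/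
noncomputable def pnorm (p : ℝ≥0∞) (a b : ℝ) (f : ℝ → ℝ) : ℝ :=
  if p = ⊤ then Lsup a b f else Lp p.toReal a b f

/-- `D**(n,p,[a,b])`, `p` finite. -/
noncomputable def Dstar (n : ℕ) (p a b : ℝ) : ℝ :=
  sInf { c | ∃ Q : Polynomial ℝ, Q.Monic ∧ Q.natDegree = n ∧ c = Lp p a b (fun x => Q.eval x) }

/-- `D**(n,∞,[a,b])`. -/
noncomputable def DstarInf (n : ℕ) (a b : ℝ) : ℝ :=
  sInf { c | ∃ Q : Polynomial ℝ, Q.Monic ∧ Q.natDegree = n ∧ c = Lsup a b (fun x => Q.eval x) }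

/-- `C(n,p)`, `p` finite. -/
noncomputable def Cnp (n : ℕ) (p : ℝ) : ℝ :=
  sSup { c | ∃ fd : ℕ → ℝ → ℝ, IsDn n 0 1 fd ∧ (∃ x ∈ Set.Icc (0:ℝ) 1, fd 0 x ≠ 0) ∧
    c = mIoo n 0 1 fd / Lp p 0 1 (fd 0) }

/-- `C(n,∞)`. -/
noncomputable def CnpInf (n : ℕ) : ℝ :=
  sSup { c | ∃ fd : ℕ → ℝ → ℝ, IsDn n 0 1 fd ∧ (∃ x ∈ Set.Icc (0:ℝ) 1, fd 0 x ≠ 0) ∧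
    c = mIoo n 0 1 fd / Lsup 0 1 (fd 0) }

lemma abs_sub_le_abs_of_isMinOn {s : Set ℝ} {f : ℝ → ℝ} {x z : ℝ} (hs : IsPreconnected s)
    (hf : ContinuousOn f s) (hz : z ∈ s) (hmin : IsMinOn (fun y => |f y|) s z) (hx : x ∈ s) :
    |f x - f z| ≤ |f x| := by
  have hsign : 0 ≤ f x * f z := by
    by_contra! hneg
    obtain ⟨y, hy, hy0⟩ : ∃ y ∈ s, f y = 0 := by
      rcases le_total (f x) (f z) with hle | hle
      · exact hs.intermediate_value hx hz hf ⟨by nlinarith, by nlinarith⟩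
      · exact hs.intermediate_value hz hx hf ⟨by nlinarith, by nlinarith⟩
    have hz0 : f z = 0 := abs_nonpos_iff.1 (by simpa [hy0] using hmin hy)
    simp [hz0] at hneg
  have hle : |f z| ≤ |f x| := hmin hx
  rw [← sq_le_sq]
  nlinarith [sq_abs (f x), sq_abs (f z), abs_mul (f x) (f z), abs_of_nonneg hsign,
    mul_le_mul_of_nonneg_right hle (abs_nonneg (f z))]

lemma mul_abs_sub_le_abs_sub_of_monotoneOn {s : Set ℝ} {f : ℝ → ℝ} {c x y : ℝ}
    (hmono : MonotoneOn (fun x => f x - c * x) s) (hx : x ∈ s) (hy : y ∈ s) :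
    c * |x - y| ≤ |f x - f y| := by
  rcases le_total x y with hxy | hxy
  · have := hmono hx hy hxy
    rw [abs_sub_comm x, abs_sub_comm (f x), abs_of_nonneg (sub_nonneg.2 hxy)]
    exact (by nlinarith : c * (y - x) ≤ f y - f x).trans (le_abs_self _)
  · have := hmono hy hx hxy
    rw [abs_of_nonneg (sub_nonneg.2 hxy)]
    exact (by nlinarith : c * (x - y) ≤ f x - f y).trans (le_abs_self _)

lemma monotoneOn_sub_mul_of_le_deriv {a b c : ℝ} {f f' : ℝ → ℝ} (hf : ContinuousOn f (Icc a b))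
    (hderiv : ∀ x ∈ Ioo a b, HasDerivAt f (f' x) x) (hle : ∀ x ∈ Ioo a b, c ≤ f' x) :
    MonotoneOn (fun x => f x - c * x) (Icc a b) := by
  refine monotoneOn_of_hasDerivWithinAt_nonneg (convex_Icc a b) (hf.sub (by fun_prop))
    (fun x hx => ?_) (fun x hx => sub_nonneg.2 (hle x (by simpa using hx)))
  rw [interior_Icc] at hx ⊢
  have hlin : HasDerivAt (fun y => c * y) c x := by simpa using (hasDerivAt_id x).const_mul c
  exact ((hderiv x hx).sub hlin).hasDerivWithinAt

-- For `F = f⁽ᵏ⁺¹⁾` this is the `k`-th derivative of the slope `x ↦ (f x - f z) / (x - z)`.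
noncomputable def segmentMoment (F : ℝ → ℝ) (z : ℝ) (k : ℕ) (x : ℝ) : ℝ :=
  ∫ t in (0 : ℝ)..1, t ^ k * F (z + t * (x - z))

section segment

variable {a b z x : ℝ} {F G : ℝ → ℝ}

lemma add_mul_sub_mem_Icc (hz : z ∈ Icc a b) (hx : x ∈ Icc a b) {t : ℝ} (ht : t ∈ Icc 0 1) :
    z + t * (x - z) ∈ Icc a b :=
  (convex_Icc a b).add_smul_sub_mem hz hx ht

lemma intervalIntegrable_pow_mul_comp_segment (hF : ContinuousOn F (Icc a b)) (hz : z ∈ Icc a b)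
    (hx : x ∈ Icc a b) (k : ℕ) :
    IntervalIntegrable (fun t => t ^ k * F (z + t * (x - z))) volume 0 1 := by
  refine ContinuousOn.intervalIntegrable_of_Icc zero_le_one ?_
  exact (continuous_pow k).continuousOn.mul
    (hF.comp (by fun_prop) fun t ht => add_mul_sub_mem_Icc hz hx ht)

lemma sub_eq_mul_segmentMoment_zero (hF : ∀ y ∈ Icc a b, HasDerivWithinAt F (G y) (Icc a b) y)
    (hG : ContinuousOn G (Icc a b)) (hz : z ∈ Icc a b) (hx : x ∈ Icc a b) :
    F x - F z = (x - z) * segmentMoment G z 0 x := by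
  have hsub : uIcc z x ⊆ Icc a b := ordConnected_Icc.uIcc_subset hz hx
  have hcomp : (x - z) * segmentMoment G z 0 x = ∫ y in z..x, G y := by
    simpa [segmentMoment, add_comm, mul_comm] using
      intervalIntegral.smul_integral_comp_mul_add (f := G) (a := 0) (b := 1) (x - z) z
  have hderiv : ∀ y ∈ Ioo (min z x) (max z x), HasDerivWithinAt F (G y) (Ioi y) y := by
    intro y ⟨hy₁, hy₂⟩
    have hmin : a ≤ min z x := le_min hz.1 hx.1
    have hmax : max z x ≤ b := max_le hz.2 hx.2
    exact ((hF y (hsub (Ioo_subset_Icc_self ⟨hy₁, hy₂⟩))).hasDerivAt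
      (Icc_mem_nhds (hmin.trans_lt hy₁) (hy₂.trans_le hmax))).hasDerivWithinAt
  rw [hcomp, intervalIntegral.integral_eq_sub_of_hasDeriv_right
    (fun y hy => (hF y (hsub hy)).continuousWithinAt.mono hsub) hderiv
    ((hG.mono hsub).intervalIntegrable)]

lemma exists_forall_abs_sub_sub_mul_le (hF : ∀ y ∈ Icc a b, HasDerivWithinAt F (G y) (Icc a b) y)
    (hG : ContinuousOn G (Icc a b)) {ε : ℝ} (hε : 0 < ε) :
    ∃ δ > 0, ∀ u ∈ Icc a b, ∀ v ∈ Icc a b, |u - v| < δ →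
      |F u - F v - (u - v) * G v| ≤ ε * |u - v| := by
  obtain ⟨δ, hδ, hGδ⟩ :=
    Metric.uniformContinuousOn_iff.1 (isCompact_Icc.uniformContinuousOn_of_continuous hG) ε hε
  refine ⟨δ, hδ, fun u hu v hv huv => ?_⟩
  have hsub : uIcc v u ⊆ Icc a b := ordConnected_Icc.uIcc_subset hv hu
  have hderiv : ∀ w ∈ uIcc v u,
      HasDerivWithinAt (fun w => F w - w * G v) (G w - G v) (uIcc v u) w := fun w hw => by
    have hlin : HasDerivWithinAt (fun w => w * G v) (G v) (uIcc v u) w := by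
      simpa using (hasDerivWithinAt_id w (uIcc v u)).mul_const (G v)
    exact ((hF w (hsub hw)).mono hsub).sub hlin
  have hbound : ∀ w ∈ uIcc v u, ‖G w - G v‖ ≤ ε := fun w hw =>
    (hGδ w (hsub hw) v hv ((abs_sub_left_of_mem_uIcc hw).trans_lt huv)).le
  have := Convex.norm_image_sub_le_of_norm_hasDerivWithin_le hderiv hbound (convex_uIcc v u)
    left_mem_uIcc right_mem_uIcc
  simp only [Real.norm_eq_abs] at this
  convert this using 2
  ring

lemma hasDerivWithinAt_segmentMoment (hz : z ∈ Icc a b)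
    (hF : ∀ y ∈ Icc a b, HasDerivWithinAt F (G y) (Icc a b) y) (hG : ContinuousOn G (Icc a b))
    (k : ℕ) (hx : x ∈ Icc a b) :
    HasDerivWithinAt (segmentMoment F z k) (segmentMoment G z (k + 1) x) (Icc a b) x := by
  have hFc : ContinuousOn F (Icc a b) := fun y hy => (hF y hy).continuousWithinAt
  rw [hasDerivWithinAt_iff_isLittleO, Asymptotics.isLittleO_iff]
  intro ε hε
  obtain ⟨δ, hδ, hT⟩ := exists_forall_abs_sub_sub_mul_le hF hG hε
  filter_upwards [self_mem_nhdsWithin, nhdsWithin_le_nhds (Metric.ball_mem_nhds x hδ)]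
    with y hy hyx
  rw [Metric.mem_ball, Real.dist_eq] at hyx
  have hrem : segmentMoment F z k y - segmentMoment F z k x - (y - x) • segmentMoment G z (k + 1) x
      = ∫ t in (0 : ℝ)..1, t ^ k * (F (z + t * (y - z)) - F (z + t * (x - z))
          - (t * (y - x)) * G (z + t * (x - z))) := by
    rw [segmentMoment, segmentMoment, segmentMoment, smul_eq_mul,
      ← intervalIntegral.integral_const_mul, ← intervalIntegral.integral_sub
        (intervalIntegrable_pow_mul_comp_segment hFc hz hy k)
        (intervalIntegrable_pow_mul_comp_segment hFc hz hx k),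
      ← intervalIntegral.integral_sub _ ((intervalIntegrable_pow_mul_comp_segment hG hz hx
        (k + 1)).const_mul _)]
    · congr 1; ext t; ring
    · exact (intervalIntegrable_pow_mul_comp_segment hFc hz hy k).sub
        (intervalIntegrable_pow_mul_comp_segment hFc hz hx k)
  rw [hrem, Real.norm_eq_abs, Real.norm_eq_abs]
  have hbound : ∀ t ∈ uIoc (0 : ℝ) 1, ‖t ^ k * (F (z + t * (y - z)) - F (z + t * (x - z))
      - (t * (y - x)) * G (z + t * (x - z)))‖ ≤ ε * |y - x| := by
    intro t ht
    rw [uIoc_of_le zero_le_one] at ht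
    have ht' : t ∈ Icc (0 : ℝ) 1 := Ioc_subset_Icc_self ht
    have hdiff : z + t * (y - z) - (z + t * (x - z)) = t * (y - x) := by ring
    have hshort : |t * (y - x)| ≤ |y - x| := by
      rw [abs_mul, abs_of_nonneg ht'.1]; exact mul_le_of_le_one_left (abs_nonneg _) ht'.2
    have := hT _ (add_mul_sub_mem_Icc hz hy ht') _ (add_mul_sub_mem_Icc hz hx ht')
      (by rw [hdiff]; exact hshort.trans_lt hyx)
    rw [hdiff] at this
    rw [Real.norm_eq_abs, abs_mul, abs_pow, abs_of_nonneg ht'.1]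
    calc t ^ k * |F (z + t * (y - z)) - F (z + t * (x - z)) - t * (y - x) * G (z + t * (x - z))|
        ≤ 1 * (ε * |y - x|) := by
          gcongr
          · exact pow_le_one₀ ht'.1 ht'.2
          · exact this.trans (by gcongr)
      _ = ε * |y - x| := one_mul _
  simpa using intervalIntegral.norm_integral_le_of_norm_le_const hbound

lemma continuousOn_segmentMoment (hz : z ∈ Icc a b) (hF : ContinuousOn F (Icc a b)) (k : ℕ) :
    ContinuousOn (segmentMoment F z k) (Icc a b) := by
  have hab : a ≤ b := hz.1.trans hz.2
  set Fe := IccExtend hab ((Icc a b).domRestrict F)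
  have hFe : Continuous Fe := continuous_IccExtend_iff.2 hF.domRestrict
  have hcont : Continuous fun x => ∫ t in (0 : ℝ)..1, t ^ k * Fe (z + t * (x - z)) := by
    apply intervalIntegral.continuous_parametric_intervalIntegral_of_continuous'
    fun_prop
  refine hcont.continuousOn.congr fun x hx => intervalIntegral.integral_congr fun t ht => ?_
  rw [uIcc_of_le zero_le_one] at ht
  simp [Fe, IccExtend_of_mem hab _ (add_mul_sub_mem_Icc hz hx ht)]

lemma monotoneOn_segmentMoment_sub_mul (hz : z ∈ Icc a b) (hF : ContinuousOn F (Icc a b)) {c : ℝ}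
    (hmono : MonotoneOn (fun x => F x - c * x) (Icc a b)) (k : ℕ) :
    MonotoneOn (fun x => segmentMoment F z k x - c / (k + 2) * x) (Icc a b) := by
  intro x hx y hy hxy
  have hpow : IntervalIntegrable (fun t : ℝ => (c * (y - x)) * t ^ (k + 1)) volume 0 1 :=
    (continuous_const.mul (continuous_pow _)).intervalIntegrable 0 1
  have hrem : segmentMoment F z k y - segmentMoment F z k x - c / (k + 2) * (y - x)
      = ∫ t in (0 : ℝ)..1, t ^ k * ((F (z + t * (y - z)) - c * (z + t * (y - z)))
          - (F (z + t * (x - z)) - c * (z + t * (x - z)))) := by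
    have hmom : ∫ t in (0 : ℝ)..1, (c * (y - x)) * t ^ (k + 1) = c / (k + 2) * (y - x) := by
      rw [intervalIntegral.integral_const_mul, integral_pow]
      push_cast
      field_simp
      ring
    rw [← hmom, segmentMoment, segmentMoment, ← intervalIntegral.integral_sub
        (intervalIntegrable_pow_mul_comp_segment hF hz hy k)
        (intervalIntegrable_pow_mul_comp_segment hF hz hx k),
      ← intervalIntegral.integral_sub _ hpow]
    · congr 1; ext t; ring
    · exact (intervalIntegrable_pow_mul_comp_segment hF hz hy k).sub
        (intervalIntegrable_pow_mul_comp_segment hF hz hx k)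
  have hnonneg : 0 ≤ segmentMoment F z k y - segmentMoment F z k x - c / (k + 2) * (y - x) := by
    rw [hrem]
    refine intervalIntegral.integral_nonneg zero_le_one fun t ht => ?_
    refine mul_nonneg (pow_nonneg ht.1 k) (sub_nonneg.2 ?_)
    exact hmono (add_mul_sub_mem_Icc hz hx ht) (add_mul_sub_mem_Icc hz hy ht)
      (by nlinarith [ht.1])
  dsimp only
  linarith

end segment

theorem exists_abs_prod_sub_le_abs (m : ℕ) {a b : ℝ} (hab : a ≤ b) {fd : ℕ → ℝ → ℝ}
    (hchain : ∀ k < m, ∀ x ∈ Icc a b, HasDerivWithinAt (fd k) (fd (k + 1) x) (Icc a b) x)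
    (hcont : ContinuousOn (fd m) (Icc a b))
    (hmono : MonotoneOn (fun x => fd m x - ((m + 1)! : ℝ) * x) (Icc a b)) :
    ∃ r : Fin (m + 1) → ℝ, (∀ i, r i ∈ Icc a b) ∧
      ∀ x ∈ Icc a b, |∏ i, (x - r i)| ≤ |fd 0 x| := by
  induction m generalizing fd with
  | zero =>
    obtain ⟨z, hz, hmin⟩ := isCompact_Icc.exists_isMinOn (nonempty_Icc.2 hab) hcont.abs
    refine ⟨fun _ => z, fun _ => hz, fun x hx => ?_⟩
    calc |∏ _i : Fin 1, (x - z)| = 1 * |x - z| := by simp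
      _ ≤ |fd 0 x - fd 0 z| := mul_abs_sub_le_abs_sub_of_monotoneOn (by simpa using hmono) hx hz
      _ ≤ |fd 0 x| := abs_sub_le_abs_of_isMinOn isPreconnected_Icc hcont hz hmin hx
  | succ m ih =>
    have hcont_le : ∀ j ≤ m + 1, ContinuousOn (fd j) (Icc a b) := fun j hj => by
      rcases hj.lt_or_eq with hj | rfl
      · exact fun x hx => (hchain j hj x hx).continuousWithinAt
      · exact hcont
    obtain ⟨z, hz, hmin⟩ :=
      isCompact_Icc.exists_isMinOn (nonempty_Icc.2 hab) (hcont_le 0 (Nat.zero_le _)).abs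
    have hfact : ((m + 1 + 1)! : ℝ) / ((m : ℝ) + 2) = (m + 1)! := by
      rw [Nat.factorial_succ (m + 1)]
      push_cast
      field_simp
      ring
    obtain ⟨s, hs, hgs⟩ := ih (fd := fun k => segmentMoment (fd (k + 1)) z k)
      (fun k hk x hx => hasDerivWithinAt_segmentMoment hz (hchain (k + 1) (by omega))
        (hcont_le (k + 2) (by omega)) k hx)
      (continuousOn_segmentMoment hz hcont m)
      (by simpa only [hfact] using monotoneOn_segmentMoment_sub_mul hz hcont hmono m)
    refine ⟨Fin.cons z s, Fin.cases hz hs, fun x hx => ?_⟩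
    calc |∏ i, (x - Fin.cons (α := fun _ => ℝ) z s i)| = |x - z| * |∏ i, (x - s i)| := by
          rw [Fin.prod_univ_succ, abs_mul]; simp
      _ ≤ |x - z| * |segmentMoment (fd 1) z 0 x| :=
          mul_le_mul_of_nonneg_left (hgs x hx) (abs_nonneg _)
      _ = |fd 0 x - fd 0 z| := by
          rw [sub_eq_mul_segmentMoment_zero (hchain 0 (by omega)) (hcont_le 1 (by omega)) hz hx,
            abs_mul]
      _ ≤ |fd 0 x| :=
          abs_sub_le_abs_of_isMinOn isPreconnected_Icc (hcont_le 0 (Nat.zero_le _)) hz hmin hx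

/-- If `f ∈ 𝒟ⁿ([a,b])` satisfies `f^{(n)}(t) ≥ n!` on `(a,b)`, then there is a monic polynomial
of degree `n` with all roots in `[a,b]` whose absolute value is dominated by `|f|` on `[a,b]`. -/
theorem stmt1 (n : ℕ) (hn : 1 ≤ n) (a b : ℝ) (hab : a < b)
    (fd : ℕ → ℝ → ℝ) (hf : IsDn n a b fd)
    (hderiv : ∀ t ∈ Set.Ioo a b, (n ! : ℝ) ≤ fd n t) :
    ∃ r : Fin n → ℝ, (∀ i, r i ∈ Set.Icc a b) ∧
      ∀ x ∈ Set.Icc a b, |∏ i, (x - r i)| ≤ |fd 0 x| := by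
  obtain ⟨m, rfl⟩ : ∃ m, n = m + 1 := ⟨n - 1, by omega⟩
  obtain ⟨hchain, hcont, hder⟩ := hf
  rw [Nat.add_sub_cancel] at hcont hder
  exact exists_abs_prod_sub_le_abs m hab.le (fun k hk => hchain k (by omega)) hcont
    (monotoneOn_sub_mul_of_le_deriv hcont hder hderiv)
end

section
/- Let n ≥ 1 be an integer, let a < b be real numbers, and let 0 < p ≤ ∞. Then the infimum of ‖f‖_{p,[a,b]} over all f ∈ 𝒟ⁿ([a,b]) with m_n(f) ≥ n! is equal to D**(n,p,[a,b]), the infimum of ‖Q‖_{p,[a,b]} over all monic real polynomials Q of degree n. -/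
open Set Polynomial Nat MeasureTheory ENNReal

/-!
Monic polynomials of degree `n` lie in the left-hand class, so only `≥` needs proof. It follows
from a pointwise bound, since every `p`-norm is monotone in `|f|`: each admissible `f` satisfies
`|f x| ≥ ∏ₖ |x - ζₖ|` on `[a, b]` for some nodes `ζ₁, …, ζₙ ∈ [a, b]`.

By Darboux's theorem `f⁽ⁿ⁾` has constant sign, say `f⁽ⁿ⁾ ≥ n!`. The nodes are chosen greedily:
`ζₖ` minimises `|φₖ₋₁|` on `[a, b]`, where `φ₀ = f` and `φₖ x = f[ζ₁, …, ζₖ, x]` is a divided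
difference (repeated nodes are allowed through the Hermite–Genocchi formula). Minimality and the
intermediate value theorem give `|φₖ₋₁ x| ≥ |φₖ₋₁ x - φₖ₋₁ ζₖ| = |x - ζₖ| |φₖ x|`, and at the last
step `|φₙ₋₁ x - φₙ₋₁ ζₙ| ≥ |x - ζₙ|`, because every divided difference of order `n` of `f` is at
least `inf f⁽ⁿ⁾ / n! ≥ 1`.
-/

theorem csInf_eq_csInf_of_subset_of_forall_exists_le {α : Type*} [ConditionallyCompleteLattice α]
    {s t : Set α} (ht : BddBelow t) (hs : s.Nonempty) (hst : s ⊆ t)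
    (h : ∀ x ∈ t, ∃ y ∈ s, y ≤ x) : sInf t = sInf s :=
  le_antisymm (csInf_le_csInf ht hs hst) <| le_csInf (hs.mono hst) fun x hx =>
    let ⟨_, hy, hyx⟩ := h x hx
    (csInf_le (ht.mono hst) hy).trans hyx

theorem forall_le_or_forall_le_neg_of_le_abs_deriv {s : Set ℝ} (hs : s.OrdConnected)
    {f f' : ℝ → ℝ} (hf : ∀ x ∈ s, HasDerivWithinAt f (f' x) s x) {c : ℝ} (hc : 0 < c)
    (hf' : ∀ x ∈ s, c ≤ |f' x|) : (∀ x ∈ s, c ≤ f' x) ∨ ∀ x ∈ s, f' x ≤ -c := by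
  by_contra! h
  obtain ⟨⟨x, hx, hxc⟩, y, hy, hyc⟩ := h
  have hx0 : f' x ≤ 0 := by rcases le_abs'.1 (hf' x hx) with h | h <;> linarith
  have hy0 : 0 ≤ f' y := by rcases le_abs'.1 (hf' y hy) with h | h <;> linarith
  obtain ⟨z, hz, hz0⟩ : (0 : ℝ) ∈ f' '' s :=
    (hs.image_hasDerivWithinAt hf).out ⟨x, hx, rfl⟩ ⟨y, hy, rfl⟩ ⟨hx0, hy0⟩
  have := hf' z hz
  rw [hz0, abs_zero] at this
  linarith

theorem exists_mem_Icc_forall_abs_sub_le_abs {a b : ℝ} (hab : a ≤ b) {u : ℝ → ℝ}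
    (hu : ContinuousOn u (Icc a b)) : ∃ ζ ∈ Icc a b, ∀ x ∈ Icc a b, |u x - u ζ| ≤ |u x| := by
  obtain ⟨ζ, hζ, hmin⟩ := isCompact_Icc.exists_isMinOn (nonempty_Icc.2 hab) hu.abs
  refine ⟨ζ, hζ, fun x hx => ?_⟩
  -- A sign change of `u` between `x` and `ζ` would produce a zero, contradicting minimality.
  have hsign : 0 ≤ u x * u ζ := by
    by_contra! hneg
    have h0 : (0 : ℝ) ∈ uIcc (u x) (u ζ) := by
      rcases mul_neg_iff.1 hneg with h | h
      · exact mem_uIcc.2 (Or.inr ⟨h.2.le, h.1.le⟩)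
      · exact mem_uIcc.2 (Or.inl ⟨h.1.le, h.2.le⟩)
    obtain ⟨y, hy, hy0⟩ := intermediate_value_uIcc (hu.mono (uIcc_subset_Icc hx hζ)) h0
    have hζ0 : |u ζ| ≤ |u y| := hmin (uIcc_subset_Icc hx hζ hy)
    rw [hy0, abs_zero, abs_nonpos_iff] at hζ0
    rw [hζ0, mul_zero] at hneg
    exact hneg.false
  have hsq : u ζ ^ 2 ≤ u x * u ζ :=
    calc u ζ ^ 2 = |u ζ| * |u ζ| := by rw [abs_mul_abs_self, sq]
      _ ≤ |u x| * |u ζ| := mul_le_mul_of_nonneg_right (hmin hx) (abs_nonneg _)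
      _ = u x * u ζ := by rw [← abs_mul, abs_of_nonneg hsign]
  exact sq_le_sq.1 (by nlinarith)

theorem Polynomial.Monic.iterate_derivative_natDegree {R : Type*} [Semiring R] {p : R[X]}
    (hp : p.Monic) : derivative^[p.natDegree] p = C (p.natDegree ! : R) := by
  have hdeg : (derivative^[p.natDegree] p).natDegree ≤ 0 :=
    (natDegree_iterate_derivative p _).trans (Nat.sub_self _).le
  rw [eq_C_of_natDegree_le_zero hdeg, coeff_iterate_derivative, zero_add, Nat.descFactorial_self,
    hp.coeff_natDegree, nsmul_one]

section Norms

variable {a b : ℝ} {f g : ℝ → ℝ}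

theorem pnorm_nonneg (p : ℝ≥0∞) (hab : a ≤ b) (f : ℝ → ℝ) : 0 ≤ pnorm p a b f := by
  unfold pnorm Lsup _root_.Lp
  split_ifs
  · exact Real.sSup_nonneg (by rintro _ ⟨x, -, rfl⟩; exact abs_nonneg _)
  · exact Real.rpow_nonneg (intervalIntegral.integral_nonneg hab fun _ _ => by positivity) _

theorem Lsup_mono (hg : ContinuousOn g (Icc a b)) (h : ∀ x ∈ Icc a b, |f x| ≤ |g x|) :
    Lsup a b f ≤ Lsup a b g := by
  refine Real.sSup_le ?_ (Real.sSup_nonneg (by rintro _ ⟨x, -, rfl⟩; exact abs_nonneg _))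
  rintro _ ⟨x, hx, rfl⟩
  exact (h x hx).trans
    (le_csSup (isCompact_Icc.image_of_continuousOn hg.abs).bddAbove ⟨x, hx, rfl⟩)

theorem Lp_mono {p : ℝ} (hp : 0 ≤ p) (hab : a ≤ b) (hf : ContinuousOn f (Icc a b))
    (hg : ContinuousOn g (Icc a b)) (h : ∀ x ∈ Icc a b, |f x| ≤ |g x|) :
    _root_.Lp p a b f ≤ _root_.Lp p a b g := by
  have hint {u : ℝ → ℝ} (hu : ContinuousOn u (Icc a b)) :
      IntervalIntegrable (fun t => |u t| ^ p) volume a b :=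
    (hu.abs.rpow_const fun _ _ => Or.inr hp).intervalIntegrable_of_Icc hab
  exact Real.rpow_le_rpow (intervalIntegral.integral_nonneg hab fun _ _ => by positivity)
    (intervalIntegral.integral_mono_on hab (hint hf) (hint hg) fun x hx =>
      Real.rpow_le_rpow (abs_nonneg _) (h x hx) hp) (one_div_nonneg.2 hp)

theorem pnorm_mono (p : ℝ≥0∞) (hab : a ≤ b) (hf : ContinuousOn f (Icc a b))
    (hg : ContinuousOn g (Icc a b)) (h : ∀ x ∈ Icc a b, |f x| ≤ |g x|) :
    pnorm p a b f ≤ pnorm p a b g := by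
  unfold pnorm
  split_ifs
  · exact Lsup_mono hg h
  · exact Lp_mono ENNReal.toReal_nonneg hab hf hg h

end Norms

/-- Unlike `IsDn`, the functions `F 0, …, F (n-1)` are continuous on all of `ℝ`; an `IsDn` jet is
brought to this form by precomposing with `projIcc a b`. -/
structure IsJet (n : ℕ) (a b : ℝ) (F : ℕ → ℝ → ℝ) : Prop where
  continuous : ∀ k < n, Continuous (F k)
  hasDerivAt : ∀ k < n, ∀ x ∈ Ioo a b, HasDerivAt (F k) (F (k + 1) x) x

theorem IsJet.neg {n : ℕ} {a b : ℝ} {F : ℕ → ℝ → ℝ} (hF : IsJet n a b F) :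
    IsJet n a b fun k x => -F k x :=
  ⟨fun k hk => (hF.continuous k hk).neg, fun k hk x hx => (hF.hasDerivAt k hk x hx).neg⟩

namespace IsDn

variable {n : ℕ} {a b : ℝ} {fd : ℕ → ℝ → ℝ}

theorem continuousOn (hD : IsDn n a b fd) {k : ℕ} (hk : k < n) :
    ContinuousOn (fd k) (Icc a b) := by
  rcases Nat.lt_or_ge (k + 1) n with h | h
  · exact fun x hx => (hD.1 k h x hx).continuousWithinAt
  · obtain rfl : k = n - 1 := by omega
    exact hD.2.1

theorem hasDerivAt (hD : IsDn n a b fd) {k : ℕ} (hk : k < n) {x : ℝ} (hx : x ∈ Ioo a b) :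
    HasDerivAt (fd k) (fd (k + 1) x) x := by
  rcases Nat.lt_or_ge (k + 1) n with h | h
  · exact (hD.1 k h x (Ioo_subset_Icc_self hx)).hasDerivAt (Icc_mem_nhds hx.1 hx.2)
  · obtain rfl : k = n - 1 := by omega
    rw [Nat.sub_add_cancel (by omega)]
    exact hD.2.2 x hx

theorem isJet_projIcc (hD : IsDn n a b fd) (hab : a ≤ b) :
    IsJet n a b fun k x => fd k (projIcc a b hab x) := by
  refine ⟨fun k hk => (hD.continuousOn hk).comp_continuous
    (continuous_subtype_val.comp continuous_projIcc) fun x => (projIcc a b hab x).2,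
    fun k hk x hx => ?_⟩
  rw [projIcc_of_mem hab (Ioo_subset_Icc_self hx)]
  refine (hD.hasDerivAt hk hx).congr_of_eventuallyEq ?_
  filter_upwards [Ioo_mem_nhds hx.1 hx.2] with y hy
  rw [projIcc_of_mem hab (Ioo_subset_Icc_self hy)]

end IsDn

theorem le_abs_of_le_mIoo {n : ℕ} {a b : ℝ} {fd : ℕ → ℝ → ℝ} {L : ℝ} (h : L ≤ mIoo n a b fd)
    {t : ℝ} (ht : t ∈ Ioo a b) : L ≤ |fd n t| :=
  h.trans (csInf_le ⟨0, by rintro _ ⟨u, -, rfl⟩; exact abs_nonneg _⟩ ⟨t, ht, rfl⟩)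

/-- `jetDivDiff F m c s ws x` is the divided difference of `y ↦ F m (c + s * y)` at the nodes
`ws ++ [x]` when `F (m + 1), F (m + 2), …` are the successive derivatives of `F m`. It is defined
by the Hermite–Genocchi recursion `g[w, ws, x] = ∫₀¹ (y ↦ g'((1 - t) w + t y))[ws, x] dt`, so
repeated nodes are allowed. -/
noncomputable def jetDivDiff (F : ℕ → ℝ → ℝ) : ℕ → ℝ → ℝ → List ℝ → ℝ → ℝ
  | m, c, s, [], x => F m (c + s * x)
  | m, c, s, w :: ws, x =>
      ∫ t in (0 : ℝ)..1, s * jetDivDiff F (m + 1) (c + s * (1 - t) * w) (s * t) ws x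

section JetDivDiff

variable {n : ℕ} {a b : ℝ} {F : ℕ → ℝ → ℝ}

theorem continuous_jetDivDiff {X : Type*} [TopologicalSpace X] (hF : ∀ k < n, Continuous (F k))
    (ws : List ℝ) {m : ℕ} (hm : m + ws.length < n) {c s x : X → ℝ} (hc : Continuous c)
    (hs : Continuous s) (hx : Continuous x) :
    Continuous fun p => jetDivDiff F m (c p) (s p) ws (x p) := by
  induction ws generalizing X m with
  | nil => exact (hF m (by simpa using hm)).comp (by fun_prop)
  | cons w ws ih =>
    refine intervalIntegral.continuous_parametric_intervalIntegral_of_continuous' ?_ 0 1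
    exact (hs.comp continuous_fst).mul
      (ih (m := m + 1) (by simp at hm; omega) (by fun_prop) (by fun_prop) (by fun_prop))

theorem mapsTo_affine_step {c s t w : ℝ} (hcs : MapsTo (fun y => c + s * y) (Icc a b) (Icc a b))
    (ht : t ∈ Icc (0 : ℝ) 1) (hw : w ∈ Icc a b) :
    MapsTo (fun y => c + s * (1 - t) * w + s * t * y) (Icc a b) (Icc a b) := by
  intro y hy
  convert hcs (convex_Icc a b hw hy (sub_nonneg.2 ht.2) ht.1 (sub_add_cancel 1 t)) using 1
  simp only [smul_eq_mul]
  ring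

theorem mapsTo_zero_add_one_mul : MapsTo (fun y => 0 + 1 * y) (Icc a b) (Icc a b) :=
  fun y hy => by simpa using hy

theorem jetDivDiff_append_singleton_mul_sub (hF : IsJet n a b F) {z x : ℝ} (hz : z ∈ Icc a b)
    (hx : x ∈ Icc a b) (ws : List ℝ) (hws : ∀ w ∈ ws, w ∈ Icc a b) :
    ∀ m c s, m + ws.length + 1 < n → MapsTo (fun y => c + s * y) (Icc a b) (Icc a b) →
      jetDivDiff F m c s (ws ++ [z]) x * (x - z) =
        jetDivDiff F m c s ws x - jetDivDiff F m c s ws z := by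
  induction ws with
  | nil =>
    intro m c s hm hcs
    have hzc := hcs hz
    have hxc := hcs hx
    simp only [List.length_nil, add_zero] at hm hzc hxc
    calc jetDivDiff F m c s [z] x * (x - z)
        = s * (x - z) * ∫ t in (0 : ℝ)..1, F (m + 1) (c + s * z + s * (x - z) * t) := by
          simp only [jetDivDiff, ← intervalIntegral.integral_const_mul,
            ← intervalIntegral.integral_mul_const]
          congr 1 with t
          rw [show c + s * (1 - t) * z + s * t * x = c + s * z + s * (x - z) * t by ring]
          ring
      _ = ∫ u in c + s * z..c + s * x, F (m + 1) u := by
          rw [intervalIntegral.mul_integral_comp_add_mul]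
          congr 1 <;> ring
      _ = F m (c + s * x) - F m (c + s * z) :=
          intervalIntegral.integral_eq_sub_of_hasDeriv_right
            (hF.continuous m (by omega)).continuousOn
            (fun u hu => (hF.hasDerivAt m (by omega) u (Ioo_subset_Ioo (le_min hzc.1 hxc.1)
              (max_le hzc.2 hxc.2) hu)).hasDerivWithinAt)
            ((hF.continuous (m + 1) hm).intervalIntegrable _ _)
  | cons w ws ih =>
    intro m c s hm hcs
    have hw : w ∈ Icc a b := hws w List.mem_cons_self
    have hint (y : ℝ) : IntervalIntegrable
        (fun t => s * jetDivDiff F (m + 1) (c + s * (1 - t) * w) (s * t) ws y) volume 0 1 :=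
      (continuous_const.mul (continuous_jetDivDiff hF.continuous ws
        (by simp at hm; omega) (by fun_prop) (by fun_prop) continuous_const)).intervalIntegrable _ _
    simp only [List.cons_append, jetDivDiff]
    rw [← intervalIntegral.integral_mul_const, ← intervalIntegral.integral_sub (hint x) (hint z)]
    refine intervalIntegral.integral_congr fun t ht => ?_
    rw [uIcc_of_le zero_le_one] at ht
    simp only [List.length_cons] at hm
    rw [mul_assoc, ih (fun u hu => hws u (List.mem_cons_of_mem w hu)) (m + 1) _ _ (by omega)
      (mapsTo_affine_step hcs ht hw), mul_sub]

end JetDivDiff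

section Domination

variable {n : ℕ} {a b : ℝ} {F : ℕ → ℝ → ℝ}

theorem mul_sub_le_jetDivDiff_sub (hF : IsJet n a b F) {L : ℝ} (hL : ∀ u ∈ Ioo a b, L ≤ F n u)
    {y x : ℝ} (hy : y ∈ Icc a b) (hx : x ∈ Icc a b) (hyx : y ≤ x) (ws : List ℝ)
    (hws : ∀ w ∈ ws, w ∈ Icc a b) :
    ∀ m c s, m + ws.length + 1 = n → 0 ≤ s → MapsTo (fun y => c + s * y) (Icc a b) (Icc a b) →
      s ^ (ws.length + 1) * L / (ws.length + 1)! * (x - y) ≤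
        jetDivDiff F m c s ws x - jetDivDiff F m c s ws y := by
  induction ws with
  | nil =>
    intro m c s hm hs hcs
    obtain rfl : n = m + 1 := by simpa using hm.symm
    have hderiv (u : ℝ) (hu : u ∈ interior (Icc a b)) := hF.hasDerivAt m m.lt_succ_self u
      (by rwa [interior_Icc] at hu)
    have := (convex_Icc a b).mul_sub_le_image_sub_of_le_deriv
      (hF.continuous m m.lt_succ_self).continuousOn
      (fun u hu => (hderiv u hu).differentiableAt.differentiableWithinAt)
      (fun u hu => (hderiv u hu).deriv ▸ hL u (by rwa [interior_Icc] at hu))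
      _ (hcs hy) _ (hcs hx) (by nlinarith)
    simp only [List.length_nil, zero_add, pow_one, factorial_one, cast_one, div_one, jetDivDiff]
    linarith
  | cons w ws ih =>
    intro m c s hm hs hcs
    have hw : w ∈ Icc a b := hws w List.mem_cons_self
    have hint (z : ℝ) : IntervalIntegrable
        (fun t => s * jetDivDiff F (m + 1) (c + s * (1 - t) * w) (s * t) ws z) volume 0 1 :=
      (continuous_const.mul (continuous_jetDivDiff hF.continuous ws
        (by simp at hm; omega) (by fun_prop) (by fun_prop) continuous_const)).intervalIntegrable _ _
    simp only [List.length_cons] at hm ⊢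
    simp only [jetDivDiff]
    rw [← intervalIntegral.integral_sub (hint x) (hint y)]
    calc s ^ (ws.length + 1 + 1) * L / (ws.length + 1 + 1)! * (x - y)
        = ∫ t in (0 : ℝ)..1, s * ((s * t) ^ (ws.length + 1) * L / (ws.length + 1)! * (x - y)) := by
          -- `∫₀¹ t ^ (j + 1) dt = 1 / (j + 2)` supplies the extra factorial.
          simp only [mul_pow, show ∀ t : ℝ, s * (s ^ (ws.length + 1) * t ^ (ws.length + 1) * L /
            (ws.length + 1)! * (x - y)) = s ^ (ws.length + 1 + 1) * L / (ws.length + 1)! *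
            (x - y) * t ^ (ws.length + 1) from fun t => by ring,
            intervalIntegral.integral_const_mul, integral_pow]
          push_cast [Nat.factorial_succ]
          field_simp
          ring
      _ ≤ _ := by
          refine intervalIntegral.integral_mono_on zero_le_one
            ((by fun_prop : Continuous _).intervalIntegrable _ _) ((hint x).sub (hint y))
            fun t ht => ?_
          rw [← mul_sub]
          exact mul_le_mul_of_nonneg_left (ih (fun u hu => hws u (List.mem_cons_of_mem w hu))
            (m + 1) _ _ (by omega) (mul_nonneg hs ht.1) (mapsTo_affine_step hcs ht hw)) hs

theorem sub_le_jetDivDiff_sub (hF : IsJet n a b F) (hFn : ∀ u ∈ Ioo a b, (n ! : ℝ) ≤ F n u)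
    {ws : List ℝ} (hn : ws.length + 1 = n) (hws : ∀ w ∈ ws, w ∈ Icc a b) {y x : ℝ}
    (hy : y ∈ Icc a b) (hx : x ∈ Icc a b) (hyx : y ≤ x) :
    x - y ≤ jetDivDiff F 0 0 1 ws x - jetDivDiff F 0 0 1 ws y := by
  have := mul_sub_le_jetDivDiff_sub hF hFn hy hx hyx ws hws 0 0 1 (by omega) zero_le_one
    mapsTo_zero_add_one_mul
  rwa [one_pow, one_mul, hn, div_self (by positivity), one_mul] at this

theorem exists_monic_abs_eval_le_jetDivDiff (hF : IsJet n a b F)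
    (hFn : ∀ u ∈ Ioo a b, (n ! : ℝ) ≤ F n u) (hab : a ≤ b) (d : ℕ) :
    ∀ ws : List ℝ, ws.length + d + 1 = n → (∀ w ∈ ws, w ∈ Icc a b) →
      ∃ Q : ℝ[X], Q.Monic ∧ Q.natDegree = d + 1 ∧
        ∀ x ∈ Icc a b, |Q.eval x| ≤ |jetDivDiff F 0 0 1 ws x| := by
  have hcont (ws : List ℝ) (hws : ws.length < n) :
      ContinuousOn (jetDivDiff F 0 0 1 ws) (Icc a b) :=
    (continuous_jetDivDiff hF.continuous ws (by omega) continuous_const continuous_const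
      continuous_id).continuousOn
  induction d with
  | zero =>
    intro ws hn hws
    obtain ⟨ζ, hζ, hmin⟩ := exists_mem_Icc_forall_abs_sub_le_abs hab (hcont ws (by omega))
    refine ⟨X - C ζ, monic_X_sub_C ζ, natDegree_X_sub_C ζ, fun x hx => (le_trans ?_ (hmin x hx))⟩
    rw [eval_sub, eval_X, eval_C]
    rcases le_total ζ x with h | h
    · rw [abs_of_nonneg (sub_nonneg.2 h)]
      exact (sub_le_jetDivDiff_sub hF hFn hn hws hζ hx h).trans (le_abs_self _)
    · rw [abs_sub_comm, abs_of_nonneg (sub_nonneg.2 h), abs_sub_comm]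
      exact (sub_le_jetDivDiff_sub hF hFn hn hws hx hζ h).trans (le_abs_self _)
  | succ d ih =>
    intro ws hn hws
    obtain ⟨ζ, hζ, hmin⟩ := exists_mem_Icc_forall_abs_sub_le_abs hab (hcont ws (by omega))
    obtain ⟨Q, hQ, hQd, hQle⟩ := ih (ws ++ [ζ]) (by simp; omega)
      fun w hw => by
        rcases List.mem_append.1 hw with hw | hw
        exacts [hws w hw, List.mem_singleton.1 hw ▸ hζ]
    refine ⟨(X - C ζ) * Q, (monic_X_sub_C ζ).mul hQ, by
      rw [(monic_X_sub_C ζ).natDegree_mul hQ, natDegree_X_sub_C, hQd, add_comm], fun x hx => ?_⟩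
    calc |((X - C ζ) * Q).eval x| = |x - ζ| * |Q.eval x| := by simp [abs_mul]
      _ ≤ |x - ζ| * |jetDivDiff F 0 0 1 (ws ++ [ζ]) x| :=
          mul_le_mul_of_nonneg_left (hQle x hx) (abs_nonneg _)
      _ = |jetDivDiff F 0 0 1 ws x - jetDivDiff F 0 0 1 ws ζ| := by
          rw [← jetDivDiff_append_singleton_mul_sub hF hζ hx ws hws 0 0 1 (by omega)
            mapsTo_zero_add_one_mul, abs_mul, mul_comm]
      _ ≤ |jetDivDiff F 0 0 1 ws x| := hmin x hx

theorem IsJet.exists_monic_abs_eval_le (hF : IsJet n a b F) (hn : 1 ≤ n) (hab : a ≤ b)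
    (hFn : ∀ u ∈ Ioo a b, (n ! : ℝ) ≤ F n u) :
    ∃ Q : ℝ[X], Q.Monic ∧ Q.natDegree = n ∧ ∀ x ∈ Icc a b, |Q.eval x| ≤ |F 0 x| := by
  obtain ⟨Q, hQ, hQd, hQle⟩ :=
    exists_monic_abs_eval_le_jetDivDiff hF hFn hab (n - 1) [] (by simp; omega) (by simp)
  exact ⟨Q, hQ, by omega, fun x hx => by simpa [jetDivDiff] using hQle x hx⟩

theorem IsDn.exists_monic_abs_eval_le {fd : ℕ → ℝ → ℝ} (hD : IsDn n a b fd) (hn : 1 ≤ n)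
    (hab : a ≤ b) (hfd : ∀ u ∈ Ioo a b, (n ! : ℝ) ≤ |fd n u|) :
    ∃ Q : ℝ[X], Q.Monic ∧ Q.natDegree = n ∧ ∀ x ∈ Icc a b, |Q.eval x| ≤ |fd 0 x| := by
  have hderiv (u : ℝ) (hu : u ∈ Ioo a b) : HasDerivWithinAt (fd (n - 1)) (fd n u) (Ioo a b) u := by
    simpa [Nat.sub_add_cancel hn] using (hD.hasDerivAt (k := n - 1) (by omega) hu).hasDerivWithinAt
  have hF := hD.isJet_projIcc hab
  have hF0 (x : ℝ) (hx : x ∈ Icc a b) : fd 0 (projIcc a b hab x) = fd 0 x := by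
    rw [projIcc_of_mem hab hx]
  have hFn (u : ℝ) (hu : u ∈ Ioo a b) : fd n (projIcc a b hab u) = fd n u := by
    rw [projIcc_of_mem hab (Ioo_subset_Icc_self hu)]
  rcases forall_le_or_forall_le_neg_of_le_abs_deriv ordConnected_Ioo hderiv (by positivity) hfd
    with hpos | hneg
  · obtain ⟨Q, hQ, hQd, hQle⟩ := hF.exists_monic_abs_eval_le hn hab fun u hu =>
      (hFn u hu).symm ▸ hpos u hu
    exact ⟨Q, hQ, hQd, fun x hx => hF0 x hx ▸ hQle x hx⟩
  · obtain ⟨Q, hQ, hQd, hQle⟩ := hF.neg.exists_monic_abs_eval_le hn hab fun u hu => by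
      simpa [hFn u hu] using le_neg_of_le_neg (hneg u hu)
    exact ⟨Q, hQ, hQd, fun x hx => by simpa [abs_neg, hF0 x hx] using hQle x hx⟩

end Domination

theorem isDn_eval_iterate_derivative (Q : ℝ[X]) {n : ℕ} (hn : 1 ≤ n) (a b : ℝ) :
    IsDn n a b fun k x => (derivative^[k] Q).eval x := by
  have h (k : ℕ) (x : ℝ) :
      HasDerivAt (fun y => (derivative^[k] Q).eval y) ((derivative^[k + 1] Q).eval x) x := by
    rw [Function.iterate_succ_apply']
    exact (derivative^[k] Q).hasDerivAt x
  refine ⟨fun k _ x _ => (h k x).hasDerivWithinAt, (Polynomial.continuous _).continuousOn,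
    fun x _ => ?_⟩
  simpa [Nat.sub_add_cancel hn] using h (n - 1) x

theorem Polynomial.Monic.mIoo_eval_iterate_derivative {Q : ℝ[X]} (hQ : Q.Monic) {a b : ℝ}
    (hab : a < b) :
    mIoo Q.natDegree a b (fun k x => (derivative^[k] Q).eval x) = Q.natDegree ! := by
  simp only [mIoo, hQ.iterate_derivative_natDegree, eval_C, Nat.abs_cast,
    (nonempty_Ioo.2 hab).image_const, csInf_singleton]

theorem stmt3_general (n : ℕ) (hn : 1 ≤ n) (a b : ℝ) (hab : a < b) (p : ℝ≥0∞) :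
    sInf { c | ∃ fd : ℕ → ℝ → ℝ, IsDn n a b fd ∧ (n ! : ℝ) ≤ mIoo n a b fd ∧
        c = pnorm p a b (fd 0) } =
      sInf { c | ∃ Q : Polynomial ℝ, Q.Monic ∧ Q.natDegree = n ∧
        c = pnorm p a b (fun x => Q.eval x) } := by
  refine csInf_eq_csInf_of_subset_of_forall_exists_le ⟨0, ?_⟩
    ⟨_, X ^ n, monic_X_pow n, natDegree_X_pow n, rfl⟩ ?_ ?_
  · rintro _ ⟨fd, -, -, rfl⟩
    exact pnorm_nonneg p hab.le _
  · rintro _ ⟨Q, hQ, rfl, rfl⟩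
    exact ⟨_, isDn_eval_iterate_derivative Q hn a b, (hQ.mIoo_eval_iterate_derivative hab).ge, rfl⟩
  · rintro _ ⟨fd, hD, hm, rfl⟩
    obtain ⟨Q, hQ, hQd, hQle⟩ :=
      hD.exists_monic_abs_eval_le hn hab.le fun t ht => le_abs_of_le_mIoo hm ht
    exact ⟨_, ⟨Q, hQ, hQd, rfl⟩,
      pnorm_mono p hab.le Q.continuous.continuousOn (hD.continuousOn (by omega)) hQle⟩

/-- The infimum of `‖f‖_p` over `f ∈ 𝒟ⁿ([a,b])` with `m_n(f) ≥ n!` equals `D**(n,p,[a,b])`,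
the infimum of `‖Q‖_p` over monic polynomials `Q` of degree `n`, for `0 < p ≤ ∞`. -/
theorem stmt3 (n : ℕ) (hn : 1 ≤ n) (a b : ℝ) (hab : a < b) (p : ℝ≥0∞) (hp : 0 < p) :
    sInf { c | ∃ fd : ℕ → ℝ → ℝ, IsDn n a b fd ∧ (n ! : ℝ) ≤ mIoo n a b fd ∧
        c = pnorm p a b (fd 0) } =
      sInf { c | ∃ Q : Polynomial ℝ, Q.Monic ∧ Q.natDegree = n ∧
        c = pnorm p a b (fun x => Q.eval x) } :=
  stmt3_general n hn a b hab p
end
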